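/- arXiv:1911.10405 — 3 statements merged into one kernel-verified Lean document; each statement's English description precedes it below -/
import Mathlib

section
/- (Gindikin–Karpelevich Finiteness, Theorem 1.3, type A_{n−1} instance.) For all λ, μ ∈ ℤⁿ, the set of left K-cosets K\(K·π^{μ}·U⁺ ∩ K·π^{λ}·U⁻) is finite; moreover it is empty unless μ ≤ λ, i.e., unless λ − μ is a nonnegative integer combination of the simple coroots e_i − e_{i+1} (1 ≤ i ≤ n−1). -/
/-!
If `g = k₁ π^μ u₁ = k₂ π^λ u₂` with `kᵢ ∈ K`, `u₁ ∈ U⁺`, `u₂ ∈ U⁻`, then `k = k₁⁻¹ k₂ ∈ K`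
factors as `k = U L` with `U = π^μ u₁ π^{-μ}` upper unipotent and `L = π^μ u₂⁻¹ π^{-λ}` lower
triangular with diagonal `p^{μ - λ}`. Solving `k = U L` for the columns of `U` and the rows of `L`,
from the last index down, the ultrametric inequality bounds `U` and `L` in terms of `μ - λ` alone.
Hence `g` and `g⁻¹` are bounded on the whole intersection, and bounded elements lie in finitely
many cosets `K g`, since such a coset is determined by `p^N g` modulo `p^{2N}`.

The trailing principal minors of `k` are integral and equal the products of the trailing diagonal
entries of `L`, so every tail sum of `μ - λ` is nonnegative, while `det k` being a unit makes the
full sum vanish: this says `μ ≤ λ`.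
-/

open Matrix Pointwise

noncomputable section

/-- `π^μ = diag(p^{μ_1},…,p^{μ_n})` as an element of `GL_n(ℚ_p)`. -/
def piPow (p : ℕ) [Fact p.Prime] (n : ℕ) (μ : Fin n → ℤ) : GL (Fin n) ℚ_[p] where
  val := diagonal fun i => (p : ℚ_[p]) ^ (μ i)
  inv := diagonal fun i => (p : ℚ_[p]) ^ (-μ i)
  val_inv := by
    have hp : (p : ℚ_[p]) ≠ 0 := Nat.cast_ne_zero.mpr (Fact.out : p.Prime).ne_zero
    rw [diagonal_mul_diagonal]
    have h : (fun i => (p : ℚ_[p]) ^ (μ i) * (p : ℚ_[p]) ^ (-μ i)) = fun _ => (1 : ℚ_[p]) := by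
      funext i; rw [← zpow_add₀ hp]; simp
    rw [h, diagonal_one]
  inv_val := by
    have hp : (p : ℚ_[p]) ≠ 0 := Nat.cast_ne_zero.mpr (Fact.out : p.Prime).ne_zero
    rw [diagonal_mul_diagonal]
    have h : (fun i => (p : ℚ_[p]) ^ (-μ i) * (p : ℚ_[p]) ^ (μ i)) = fun _ => (1 : ℚ_[p]) := by
      funext i; rw [← zpow_add₀ hp]; simp
    rw [h, diagonal_one]

/-- `K = GL_n(ℤ_p)`: matrices with entries in `ℤ_p` whose determinant is a unit of `ℤ_p`. -/
def Kgp (p : ℕ) [Fact p.Prime] (n : ℕ) : Set (GL (Fin n) ℚ_[p]) :=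
  {g | (∀ i j, ‖(g : Matrix (Fin n) (Fin n) ℚ_[p]) i j‖ ≤ 1) ∧
    ‖(g : Matrix (Fin n) (Fin n) ℚ_[p]).det‖ = 1}

/-- `U⁺`: upper triangular unipotent matrices. -/
def Uplus (p : ℕ) [Fact p.Prime] (n : ℕ) : Set (GL (Fin n) ℚ_[p]) :=
  {g | (∀ i, (g : Matrix (Fin n) (Fin n) ℚ_[p]) i i = 1) ∧
    ∀ i j : Fin n, j < i → (g : Matrix (Fin n) (Fin n) ℚ_[p]) i j = 0}

/-- `U⁻`: lower triangular unipotent matrices. -/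
def Uminus (p : ℕ) [Fact p.Prime] (n : ℕ) : Set (GL (Fin n) ℚ_[p]) :=
  {g | (∀ i, (g : Matrix (Fin n) (Fin n) ℚ_[p]) i i = 1) ∧
    ∀ i j : Fin n, i < j → (g : Matrix (Fin n) (Fin n) ℚ_[p]) i j = 0}

/-- The simple coroot `e_i − e_{i+1}` (0-indexed `i`), as a vector in `ℤⁿ`. -/
def simpleCoroot (n : ℕ) (i : ℕ) : Fin n → ℤ :=
  fun j => (if (j : ℕ) = i then 1 else 0) - (if (j : ℕ) = i + 1 then 1 else 0)

/-- Dominance order: `μ ≤ λ` iff `λ − μ` is a nonnegative integral combination of the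
simple coroots `e_i − e_{i+1}`, `1 ≤ i ≤ n−1`. -/
def domLE (n : ℕ) (μ lam : Fin n → ℤ) : Prop :=
  ∃ c : ℕ → ℕ,
    (fun j => lam j - μ j) = ∑ i ∈ Finset.range (n - 1), fun j => (c i : ℤ) * simpleCoroot n i j

/-- The permutation matrix of `w ∈ S_n` as an element of `GL_n(ℚ_p)`; the assignment
`w ↦ permGL p n w` is a group embedding of `S_n` into `GL_n(ℚ_p)`. -/
def permGL (p : ℕ) [Fact p.Prime] (n : ℕ) (w : Equiv.Perm (Fin n)) : GL (Fin n) ℚ_[p] where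
  val := (w⁻¹).permMatrix ℚ_[p]
  inv := w.permMatrix ℚ_[p]
  val_inv := by
    show ((w⁻¹).toPEquiv.toMatrix : Matrix (Fin n) (Fin n) ℚ_[p]) * w.toPEquiv.toMatrix = 1
    rw [← PEquiv.toMatrix_trans, ← Equiv.toPEquiv_trans]
    have h : Equiv.trans w⁻¹ w = Equiv.refl (Fin n) := by ext x; simp
    rw [h, Equiv.toPEquiv_refl, PEquiv.toMatrix_refl]
  inv_val := by
    show (w.toPEquiv.toMatrix : Matrix (Fin n) (Fin n) ℚ_[p]) * (w⁻¹).toPEquiv.toMatrix = 1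
    rw [← PEquiv.toMatrix_trans, ← Equiv.toPEquiv_trans]
    have h : Equiv.trans w w⁻¹ = Equiv.refl (Fin n) := by ext x; simp
    rw [h, Equiv.toPEquiv_refl, PEquiv.toMatrix_refl]

/-- Coxeter length of a permutation: the number of inversions. -/
def permLength (n : ℕ) (w : Equiv.Perm (Fin n)) : ℕ :=
  ((Finset.univ : Finset (Fin n × Fin n)).filter fun q => q.1 < q.2 ∧ w q.2 < w q.1).card

end

open Matrix

attribute [local instance] Matrix.normedAddCommGroup

theorem Set.mem_mul_singleton_mul {G : Type*} [Mul G] {s t : Set G} {x g : G} :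
    g ∈ s * {x} * t ↔ ∃ a ∈ s, ∃ b ∈ t, g = a * x * b := by
  simp [Set.mem_mul, eq_comm]

theorem Set.finite_image_of_factorsThrough {α β γ : Type*} [Finite γ] {s : Set α} (f : α → β)
    (φ : α → γ) (h : ∀ a ∈ s, ∀ b ∈ s, φ a = φ b → f a = f b) : (f '' s).Finite := by
  refine Set.finite_coe_iff.1 <|
    Finite.of_injective (fun y : f '' s => φ y.2.choose) fun y z hyz => ?_
  obtain ⟨hy, hfy⟩ := y.2.choose_spec
  obtain ⟨hz, hfz⟩ := z.2.choose_spec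
  exact Subtype.ext (hfy.symm.trans ((h _ hy _ hz hyz).trans hfz))

section Ultrametric

variable {l m o R : Type*} [Fintype l] [Fintype m] [Fintype o] [NormedRing R] [IsUltrametricDist R]

theorem Matrix.norm_mul_le_of_isUltrametricDist (A : Matrix l m R) (B : Matrix m o R) :
    ‖A * B‖ ≤ ‖A‖ * ‖B‖ :=
  (norm_le_iff (by positivity)).2 fun _ _ =>
    IsUltrametricDist.norm_sum_le_of_forall_le_of_nonneg (by positivity) fun _ _ =>
      (norm_mul_le _ _).trans <| mul_le_mul (norm_entry_le_entrywise_sup_norm A)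
        (norm_entry_le_entrywise_sup_norm B) (norm_nonneg _) (norm_nonneg _)

theorem Matrix.norm_one_add_le_one [DecidableEq m] [NormOneClass R] {X : Matrix m m R}
    (hX : ‖X‖ ≤ 1) : ‖1 + X‖ ≤ 1 := by
  refine (norm_le_iff zero_le_one).2 fun i j => (IsUltrametricDist.norm_add_le_max _ _).trans ?_
  refine max_le ?_ ((norm_entry_le_entrywise_sup_norm X).trans hX)
  rcases eq_or_ne i j with rfl | hij
  · simp
  · simp [one_apply_ne hij]

end Ultrametric

section GeneralLinearGroup

variable {ι R : Type*} [Fintype ι] [DecidableEq ι] [NormedCommRing R] [IsUltrametricDist R]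

theorem Matrix.GeneralLinearGroup.norm_val_mul_le (a b : GL ι R) : ‖(a * b).1‖ ≤ ‖a.1‖ * ‖b.1‖ :=
  norm_mul_le_of_isUltrametricDist a.1 b.1

theorem Matrix.GeneralLinearGroup.norm_val_mul_inv_le_one [NormOneClass R] {a b : GL ι R}
    (h : ‖a.1 - b.1‖ * ‖(b⁻¹).1‖ ≤ 1) : ‖(a * b⁻¹).1‖ ≤ 1 := by
  have hab : (a * b⁻¹).1 = 1 + (a.1 - b.1) * (b⁻¹).1 := by
    rw [sub_mul, ← coe_mul b, mul_inv_cancel, coe_one, coe_mul]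
    abel
  rw [hab]
  exact norm_one_add_le_one ((norm_mul_le_of_isUltrametricDist _ _).trans h)

theorem Matrix.GeneralLinearGroup.norm_det_inv_val {𝕜 : Type*} [NormedField 𝕜] (g : GL ι 𝕜) :
    ‖(g⁻¹).1.det‖ = ‖g.1.det‖⁻¹ := by
  rw [coe_inv, det_nonsing_inv, Ring.inverse_eq_inv', norm_inv]

end GeneralLinearGroup

section Triangular

variable {ι R : Type*} [Fintype ι] [LinearOrder ι] [NonUnitalNonAssocSemiring R]

theorem Matrix.IsLowerTriangular.mul_apply_self {A B : Matrix ι ι R} (hA : A.IsLowerTriangular)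
    (hB : B.IsLowerTriangular) (i : ι) : (A * B) i i = A i i * B i i := by
  rw [mul_apply]
  refine Finset.sum_eq_single i (fun l _ hli => ?_) (by simp)
  rcases hli.lt_or_gt with h | h
  · rw [hB h, mul_zero]
  · rw [hA h, zero_mul]

theorem Matrix.toBlock_mul_of_isLowerTriangular (A : Matrix ι ι R) {L : Matrix ι ι R}
    (hL : L.IsLowerTriangular) {q : ι → Prop} [DecidablePred q] (hq : Monotone q) :
    (A * L).toBlock q q = A.toBlock q q * L.toBlock q q := by
  ext i j
  simp only [toBlock_apply, mul_apply]
  rw [← Finset.sum_subtype (Finset.univ.filter q) (f := fun l => A i l * L l j) (by simp),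
    Finset.sum_filter_of_ne fun l _ hl => ?_]
  by_contra hql
  exact hl (by rw [hL (lt_of_not_ge fun hjl => hql (hq hjl j.2)), mul_zero])

theorem Matrix.mul_apply_eq_add_sum_Ioi [LocallyFiniteOrderTop ι] {A B : Matrix ι ι R} {i j : ι}
    (m : ι) (h : ∀ l < m, A i l * B l j = 0) :
    (A * B) i j = A i m * B m j + ∑ l ∈ Finset.Ioi m, A i l * B l j := by
  rw [Finset.add_sum_Ioi_eq_sum_Ici (f := fun l => A i l * B l j), mul_apply]
  refine (Finset.sum_subset (Finset.subset_univ _) fun l _ hl => h l ?_).symm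
  simpa using hl

end Triangular

section TriangularDet

variable {ι R : Type*} [Fintype ι] [DecidableEq ι] [LinearOrder ι] [CommRing R]

theorem Matrix.det_toBlock_mul_eq_prod_diag {U L : Matrix ι ι R} (hU : U.IsUpperTriangular)
    (hU1 : ∀ i, U i i = 1) (hL : L.IsLowerTriangular) {q : ι → Prop} [DecidablePred q]
    (hq : Monotone q) : ((U * L).toBlock q q).det = ∏ t : {t // q t}, L t t := by
  have hUq : (U.toBlock q q).IsUpperTriangular := fun _ _ h => hU h
  have hLq : (L.toBlock q q).IsLowerTriangular := fun _ _ h => hL h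
  rw [toBlock_mul_of_isLowerTriangular _ hL hq, det_mul, det_of_isUpperTriangular hUq,
    det_of_isLowerTriangular _ hLq]
  simp [hU1]

end TriangularDet

section Factorization

variable {𝕜 : Type*} [NormedField 𝕜] [IsUltrametricDist 𝕜]

theorem Matrix.norm_col_row_le_of_norm_upper_mul_lower_le_one {ι : Type*} [Fintype ι]
    [LinearOrder ι] [LocallyFiniteOrderTop ι] {U L : Matrix ι ι 𝕜} {R B : ℝ} (hR : 1 ≤ R)
    (hB : 1 ≤ B) (hU : U.IsUpperTriangular) (hU1 : ∀ i, U i i = 1) (hL : L.IsLowerTriangular)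
    (hUL : ‖U * L‖ ≤ 1) {m : ι} (hLR : 1 ≤ R * ‖L m m‖)
    (hlater : ∀ l, m < l → (∀ i, ‖U i l‖ ≤ B) ∧ ∀ j, ‖L l j‖ ≤ B) :
    (∀ i, ‖U i m‖ ≤ R * B ^ 2) ∧ ∀ j, ‖L m j‖ ≤ R * B ^ 2 := by
  have head : ∀ i j, ‖(U * L) i j - ∑ l ∈ Finset.Ioi m, U i l * L l j‖ ≤ B ^ 2 := fun i j => by
    rw [sub_eq_add_neg]
    refine (IsUltrametricDist.norm_add_le_max _ _).trans (max_le ?_ ?_)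
    · exact (norm_entry_le_entrywise_sup_norm _).trans (hUL.trans (one_le_pow₀ hB))
    refine (norm_neg _).trans_le <|
      IsUltrametricDist.norm_sum_le_of_forall_le_of_nonneg (by positivity) fun l hl => ?_
    obtain ⟨hUl, hLl⟩ := hlater l (Finset.mem_Ioi.1 hl)
    rw [norm_mul, sq]
    exact mul_le_mul (hUl i) (hLl j) (norm_nonneg _) (by positivity)
  constructor
  · intro i
    have h := mul_apply_eq_add_sum_Ioi (A := U) (B := L) (i := i) (j := m) m
      fun l hl => by rw [hL hl, mul_zero]
    calc ‖U i m‖ ≤ ‖U i m‖ * (R * ‖L m m‖) := le_mul_of_one_le_right (norm_nonneg _) hLR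
      _ = R * ‖U i m * L m m‖ := by rw [norm_mul]; ring
      _ ≤ R * B ^ 2 := by
        rw [eq_sub_of_add_eq h.symm]
        exact mul_le_mul_of_nonneg_left (head i m) (zero_le_one.trans hR)
  · intro j
    have h := mul_apply_eq_add_sum_Ioi (A := U) (B := L) (i := m) (j := j) m
      fun l hl => by rw [hU hl, zero_mul]
    rw [hU1, one_mul] at h
    rw [eq_sub_of_add_eq h.symm]
    exact (head m j).trans (le_mul_of_one_le_left (by positivity) hR)

theorem Matrix.norm_le_of_norm_upper_mul_lower_le_one {n : ℕ} {U L : Matrix (Fin n) (Fin n) 𝕜}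
    {R : ℝ} (hR : 1 ≤ R) (hU : U.IsUpperTriangular) (hU1 : ∀ i, U i i = 1)
    (hL : L.IsLowerTriangular) (hLR : ∀ i, 1 ≤ R * ‖L i i‖) (hUL : ‖U * L‖ ≤ 1) :
    ‖U‖ ≤ R ^ 3 ^ n ∧ ‖L‖ ≤ R ^ 3 ^ n := by
  have hmono : ∀ {a b : ℕ}, a ≤ b → R ^ 3 ^ a ≤ R ^ 3 ^ b := fun h =>
    pow_le_pow_right₀ hR (Nat.pow_le_pow_right three_pos h)
  suffices key : ∀ m : Fin n, (∀ i, ‖U i m‖ ≤ R ^ 3 ^ (n - m)) ∧ ∀ j, ‖L m j‖ ≤ R ^ 3 ^ (n - m) by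
    exact ⟨(norm_le_iff (by positivity)).2 fun i m => ((key m).1 i).trans (hmono (Nat.sub_le _ _)),
      (norm_le_iff (by positivity)).2 fun m j => ((key m).2 j).trans (hmono (Nat.sub_le _ _))⟩
  intro m
  induction m using WellFoundedGT.induction with
  | _ m ih =>
  have hlater : ∀ l, m < l → n - l ≤ n - m - 1 := fun l hml => by
    have : (m : ℕ) < l := hml
    omega
  have hstep := norm_col_row_le_of_norm_upper_mul_lower_le_one (B := R ^ 3 ^ (n - m - 1)) hR
    (one_le_pow₀ hR) hU hU1 hL hUL (hLR m) fun l hml =>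
      ⟨fun i => ((ih l hml).1 i).trans (hmono (hlater l hml)),
        fun j => ((ih l hml).2 j).trans (hmono (hlater l hml))⟩
  have hexp : R * (R ^ 3 ^ (n - m - 1)) ^ 2 ≤ R ^ 3 ^ (n - m) := by
    rw [← pow_mul, ← pow_succ']
    refine pow_le_pow_right₀ hR ?_
    obtain ⟨k, hk⟩ : ∃ k, n - m = k + 1 := ⟨n - m - 1, by omega⟩
    rw [hk, Nat.add_sub_cancel, pow_succ]
    have := Nat.one_le_pow k 3 three_pos
    omega
  exact ⟨fun i => (hstep.1 i).trans hexp, fun j => (hstep.2 j).trans hexp⟩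

end Factorization

section PadicMatrix

variable {p : ℕ} [Fact p.Prime] {ι : Type*} [Fintype ι] [DecidableEq ι]

theorem Padic.exists_map_eq_of_norm_le_one {A : Matrix ι ι ℚ_[p]} (hA : ‖A‖ ≤ 1) :
    ∃ M : Matrix ι ι ℤ_[p], PadicInt.Coe.ringHom.mapMatrix M = A :=
  ⟨fun i j => ⟨A i j, (norm_le_iff zero_le_one).1 hA i j⟩, rfl⟩

theorem Padic.norm_det_le_one {A : Matrix ι ι ℚ_[p]} (hA : ‖A‖ ≤ 1) : ‖A.det‖ ≤ 1 := by
  obtain ⟨M, rfl⟩ := exists_map_eq_of_norm_le_one hA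
  rw [← RingHom.map_det]
  exact PadicInt.norm_le_one _

theorem Padic.norm_adjugate_le_one {A : Matrix ι ι ℚ_[p]} (hA : ‖A‖ ≤ 1) : ‖A.adjugate‖ ≤ 1 := by
  obtain ⟨M, rfl⟩ := exists_map_eq_of_norm_le_one hA
  rw [← RingHom.map_adjugate]
  exact (norm_le_iff zero_le_one).2 fun i j => PadicInt.norm_le_one _

omit [Fintype ι] [DecidableEq ι] in
theorem Padic.norm_prod_p_zpow (s : Finset ι) (e : ι → ℤ) :
    ‖∏ t ∈ s, (p : ℚ_[p]) ^ e t‖ = (p : ℝ) ^ (-∑ t ∈ s, e t) := by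
  classical
  have hp : (p : ℝ) ≠ 0 := by exact_mod_cast (Fact.out : p.Prime).ne_zero
  induction s using Finset.induction_on with
  | empty => simp
  | insert a s ha ih =>
    rw [Finset.prod_insert ha, Finset.sum_insert ha, norm_mul, ih, Padic.norm_p_zpow, neg_add,
      zpow_add₀ hp]

end PadicMatrix

section MaximalCompact

variable {p : ℕ} [Fact p.Prime] {n : ℕ}

theorem mem_Kgp_iff {g : GL (Fin n) ℚ_[p]} : g ∈ Kgp p n ↔ ‖g.1‖ ≤ 1 ∧ ‖g.1.det‖ = 1 := by
  rw [norm_le_iff zero_le_one]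
  rfl

variable (p n) in
def Kgp.subgroup : Subgroup (GL (Fin n) ℚ_[p]) where
  carrier := Kgp p n
  one_mem' := mem_Kgp_iff.2 ⟨(norm_le_iff zero_le_one).2 fun i j => by
    rcases eq_or_ne i j with rfl | hij <;> simp [one_apply_ne, *], by simp⟩
  mul_mem' {a b} ha hb := by
    rw [mem_Kgp_iff, Matrix.GeneralLinearGroup.coe_mul] at *
    refine ⟨(norm_mul_le_of_isUltrametricDist _ _).trans ?_,
      by rw [det_mul, norm_mul, ha.2, hb.2, one_mul]⟩
    simpa using mul_le_mul ha.1 hb.1 (norm_nonneg _) zero_le_one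
  inv_mem' {g} hg := by
    rw [mem_Kgp_iff] at *
    refine ⟨?_, by rw [GeneralLinearGroup.norm_det_inv_val, hg.2, inv_one]⟩
    rw [Matrix.GeneralLinearGroup.coe_inv, inv_def]
    refine (norm_le_iff zero_le_one).2 fun i j => ?_
    rw [Matrix.smul_apply, smul_eq_mul, norm_mul, Ring.inverse_eq_inv', norm_inv, hg.2, inv_one,
      one_mul]
    exact (norm_entry_le_entrywise_sup_norm _).trans (Padic.norm_adjugate_le_one hg.1)

theorem mem_Kgp_of_norm_le_one {g : GL (Fin n) ℚ_[p]} (hg : ‖g.1‖ ≤ 1) (hg' : ‖(g⁻¹).1‖ ≤ 1) :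
    g ∈ Kgp p n := by
  have hdet := Padic.norm_det_le_one hg
  have hdet' := Padic.norm_det_le_one hg'
  have h0 : g.1.det ≠ 0 := by simpa using (Matrix.GeneralLinearGroup.det g).ne_zero
  rw [GeneralLinearGroup.norm_det_inv_val, inv_le_one₀ (norm_pos_iff.2 h0)] at hdet'
  exact ⟨(norm_le_iff zero_le_one).1 hg, le_antisymm hdet hdet'⟩

theorem Kgp_mul_singleton_eq {g g' : GL (Fin n) ℚ_[p]} (h : g' * g⁻¹ ∈ Kgp p n) :
    Kgp p n * {g'} = Kgp p n * {g} := by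
  ext x
  simp only [Set.mul_singleton, Set.mem_image]
  constructor
  · rintro ⟨k, hk, rfl⟩
    exact ⟨k * (g' * g⁻¹), (Kgp.subgroup p n).mul_mem hk h, by group⟩
  · rintro ⟨k, hk, rfl⟩
    exact ⟨k * (g' * g⁻¹)⁻¹, (Kgp.subgroup p n).mul_mem hk ((Kgp.subgroup p n).inv_mem h),
      by group⟩

end MaximalCompact

section Decomposition

variable {p : ℕ} [Fact p.Prime] {n : ℕ}

theorem piPow_mul_mul_inv_apply (μ ν : Fin n → ℤ) (g : GL (Fin n) ℚ_[p]) (i j : Fin n) :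
    (piPow p n μ * g * (piPow p n ν)⁻¹).1 i j =
      (p : ℚ_[p]) ^ μ i * g.1 i j * (p : ℚ_[p]) ^ (-ν j) := by
  have hμ : (piPow p n μ).1 = diagonal fun i => (p : ℚ_[p]) ^ μ i := rfl
  have hν : ((piPow p n ν)⁻¹).1 = diagonal fun i => (p : ℚ_[p]) ^ (-ν i) := rfl
  rw [Matrix.GeneralLinearGroup.coe_mul, Matrix.GeneralLinearGroup.coe_mul, hμ, hν, mul_diagonal,
    diagonal_mul]

theorem inv_mem_Uminus {u : GL (Fin n) ℚ_[p]} (hu : u ∈ Uminus p n) : u⁻¹ ∈ Uminus p n := by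
  have hL : u.1.IsLowerTriangular := fun i j h => hu.2 i j h
  have := u.invertible
  have hL' : (u⁻¹).1.IsLowerTriangular := by
    rw [Matrix.GeneralLinearGroup.coe_inv]
    exact blockTriangular_inv_of_blockTriangular hL
  refine ⟨fun i => ?_, fun i j h => hL' h⟩
  have h1 : (u.1 * (u⁻¹).1) i i = 1 := by
    rw [← Matrix.GeneralLinearGroup.coe_mul, mul_inv_cancel, Matrix.GeneralLinearGroup.coe_one,
      one_apply_eq]
  rwa [hL.mul_apply_self hL', hu.1, one_mul] at h1

theorem exists_upper_mul_lower {lam μ : Fin n → ℤ} {g : GL (Fin n) ℚ_[p]}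
    (hg : g ∈ (Kgp p n * {piPow p n μ} * Uplus p n) ∩ (Kgp p n * {piPow p n lam} * Uminus p n)) :
    ∃ k₁ ∈ Kgp p n, ∃ k₂ ∈ Kgp p n, ∃ U ∈ Uplus p n, ∃ L : GL (Fin n) ℚ_[p],
      L.1.IsLowerTriangular ∧ (∀ i, L.1 i i = (p : ℚ_[p]) ^ (μ i - lam i)) ∧
      k₁⁻¹ * k₂ = U * L ∧ g = k₁ * U * piPow p n μ ∧ g⁻¹ = (piPow p n μ)⁻¹ * L * k₂⁻¹ := by
  have hp : (p : ℚ_[p]) ≠ 0 := by exact_mod_cast (Fact.out : p.Prime).ne_zero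
  obtain ⟨hg₁, hg₂⟩ := hg
  obtain ⟨k₁, hk₁, u₁, hu₁, rfl⟩ := Set.mem_mul_singleton_mul.1 hg₁
  obtain ⟨k₂, hk₂, u₂, hu₂, h⟩ := Set.mem_mul_singleton_mul.1 hg₂
  have hu₂' := inv_mem_Uminus hu₂
  have hk₂_eq : k₂ = k₁ * piPow p n μ * u₁ * u₂⁻¹ * (piPow p n lam)⁻¹ := by
    rw [h]
    group
  refine ⟨k₁, hk₁, k₂, hk₂, piPow p n μ * u₁ * (piPow p n μ)⁻¹, ⟨fun i => ?_, fun i j hij => ?_⟩,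
    piPow p n μ * u₂⁻¹ * (piPow p n lam)⁻¹, fun i j hij => ?_, fun i => ?_, ?_, by group, ?_⟩
  · rw [piPow_mul_mul_inv_apply, hu₁.1, mul_one, ← zpow_add₀ hp, add_neg_cancel, zpow_zero]
  · rw [piPow_mul_mul_inv_apply, hu₁.2 i j hij, mul_zero, zero_mul]
  · rw [piPow_mul_mul_inv_apply, hu₂'.2 i j hij, mul_zero, zero_mul]
  · rw [piPow_mul_mul_inv_apply, hu₂'.1, mul_one, ← zpow_add₀ hp, sub_eq_add_neg]
  · rw [hk₂_eq]
    group
  · rw [h]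
    group

end Decomposition

section Finiteness

variable {p : ℕ} [Fact p.Prime] {n : ℕ}

theorem PadicInt.norm_sub_le_of_toZModPow_eq {m : ℕ} {x y : ℤ_[p]}
    (h : toZModPow m x = toZModPow m y) : ‖x - y‖ ≤ ((p : ℝ) ^ m)⁻¹ := by
  rw [← sub_eq_zero, ← map_sub, ← RingHom.mem_ker, ker_toZModPow,
    ← norm_le_pow_iff_mem_span_pow] at h
  simpa using h

variable (p) in
/-- The residue of `x ∈ ℤ_p` modulo `p ^ m`; the value `0` off `ℤ_p` is never used. -/
noncomputable def reduceModPow (m : ℕ) (x : ℚ_[p]) : ZMod (p ^ m) :=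
  if h : ‖x‖ ≤ 1 then PadicInt.toZModPow m (⟨x, h⟩ : ℤ_[p]) else 0

theorem norm_sub_le_of_reduceModPow_eq {m : ℕ} {x y : ℚ_[p]} (hx : ‖x‖ ≤ 1) (hy : ‖y‖ ≤ 1)
    (h : reduceModPow p m x = reduceModPow p m y) : ‖x - y‖ ≤ ((p : ℝ) ^ m)⁻¹ := by
  rw [reduceModPow, dif_pos hx, reduceModPow, dif_pos hy] at h
  exact PadicInt.norm_sub_le_of_toZModPow_eq h

theorem finite_Kgp_cosets_of_norm_le (C : ℝ) :
    ((fun g => Kgp p n * {g}) '' {g : GL (Fin n) ℚ_[p] | ‖g.1‖ ≤ C ∧ ‖(g⁻¹).1‖ ≤ C}).Finite := by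
  set B := {g : GL (Fin n) ℚ_[p] | ‖g.1‖ ≤ C ∧ ‖(g⁻¹).1‖ ≤ C}
  have hp := (Fact.out : p.Prime)
  obtain ⟨N, hN⟩ := pow_unbounded_of_one_lt C (Nat.one_lt_cast.2 hp.one_lt)
  set a : ℝ := (p : ℝ) ^ N
  have ha : 0 < a := pow_pos (Nat.cast_pos.2 hp.pos) N
  have hnorm : ∀ x : ℚ_[p], ‖(p : ℚ_[p]) ^ N * x‖ = a⁻¹ * ‖x‖ := fun x => by
    rw [norm_mul, Padic.norm_p_pow, _root_.zpow_neg, zpow_natCast]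
  have hint : ∀ g ∈ B, ∀ i j, ‖(p : ℚ_[p]) ^ N * g.1 i j‖ ≤ 1 := fun g hg i j => by
    rw [hnorm, inv_mul_le_one₀ ha]
    exact (norm_entry_le_entrywise_sup_norm _).trans (hg.1.trans hN.le)
  have : NeZero (p ^ (2 * N)) := ⟨pow_ne_zero _ hp.ne_zero⟩
  -- The entries of `p ^ N g` lie in `ℤ_p`, and their residues modulo `p ^ (2N)` determine `Kg`.
  set φ : GL (Fin n) ℚ_[p] → Fin n → Fin n → ZMod (p ^ (2 * N)) :=
    fun g i j => reduceModPow p (2 * N) ((p : ℚ_[p]) ^ N * g.1 i j)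
  have key : ∀ g ∈ B, ∀ g' ∈ B, φ g = φ g' → ‖(g * g'⁻¹).1‖ ≤ 1 := by
    intro g hg g' hg' hφ
    have hclose : ‖g.1 - g'.1‖ ≤ a⁻¹ := (norm_le_iff (inv_nonneg.2 ha.le)).2 fun i j => by
      have h := norm_sub_le_of_reduceModPow_eq (hint g hg i j) (hint g' hg' i j)
        (congrFun (congrFun hφ i) j)
      rw [← mul_sub, hnorm, two_mul, pow_add, mul_inv] at h
      exact le_of_mul_le_mul_left h (inv_pos.2 ha)
    refine GeneralLinearGroup.norm_val_mul_inv_le_one ?_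
    calc ‖g.1 - g'.1‖ * ‖(g'⁻¹).1‖ ≤ a⁻¹ * a :=
          mul_le_mul hclose (hg'.2.trans hN.le) (norm_nonneg _) (inv_nonneg.2 ha.le)
      _ = 1 := inv_mul_cancel₀ ha.ne'
  refine Set.finite_image_of_factorsThrough _ φ fun g hg g' hg' hφ =>
    Kgp_mul_singleton_eq (mem_Kgp_of_norm_le_one (key g hg g' hg' hφ) ?_)
  rw [_root_.mul_inv_rev, inv_inv]
  exact key g' hg' g hg hφ.symm

theorem exists_norm_le_of_mem_inter (lam μ : Fin n → ℤ) : ∃ C : ℝ,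
    ∀ g ∈ (Kgp p n * {piPow p n μ} * Uplus p n) ∩ (Kgp p n * {piPow p n lam} * Uminus p n),
      ‖g.1‖ ≤ C ∧ ‖(g⁻¹).1‖ ≤ C := by
  have hp : (p : ℚ_[p]) ≠ 0 := by exact_mod_cast (Fact.out : p.Prime).ne_zero
  set R := max 1 ‖fun i => (p : ℚ_[p]) ^ (lam i - μ i)‖
  refine ⟨max (R ^ 3 ^ n * ‖(piPow p n μ).1‖) (‖((piPow p n μ)⁻¹).1‖ * R ^ 3 ^ n), fun g hg => ?_⟩
  obtain ⟨k₁, hk₁, k₂, hk₂, U, hU, L, hL, hLd, hUL, hg₁, hg₂⟩ := exists_upper_mul_lower hg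
  have hLR : ∀ i, 1 ≤ R * ‖L.1 i i‖ := fun i => calc
    (1 : ℝ) = ‖(p : ℚ_[p]) ^ (lam i - μ i)‖ * ‖L.1 i i‖ := by
      rw [hLd, ← norm_mul, ← zpow_add₀ hp, sub_add_sub_cancel, sub_self, zpow_zero, norm_one]
    _ ≤ R * ‖L.1 i i‖ := by
      gcongr
      exact (norm_le_pi_norm (fun i => (p : ℚ_[p]) ^ (lam i - μ i)) i).trans (le_max_right _ _)
  have hk : ‖(U * L).1‖ ≤ 1 :=
    (mem_Kgp_iff.1 (hUL ▸ (Kgp.subgroup p n).mul_mem ((Kgp.subgroup p n).inv_mem hk₁) hk₂)).1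
  obtain ⟨hUb, hLb⟩ := norm_le_of_norm_upper_mul_lower_le_one (U := U.1) (L := L.1)
    (le_max_left _ _) (fun _ _ h => hU.2 _ _ h) hU.1 hL hLR hk
  constructor
  · refine le_max_of_le_left ?_
    calc ‖g.1‖ ≤ ‖k₁.1‖ * ‖U.1‖ * ‖(piPow p n μ).1‖ := by
          rw [hg₁]
          exact (GeneralLinearGroup.norm_val_mul_le _ _).trans
            (by gcongr; exact GeneralLinearGroup.norm_val_mul_le _ _)
      _ ≤ 1 * R ^ 3 ^ n * ‖(piPow p n μ).1‖ := by gcongr; exact (mem_Kgp_iff.1 hk₁).1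
      _ = _ := by rw [one_mul]
  · refine le_max_of_le_right ?_
    calc ‖(g⁻¹).1‖ ≤ ‖((piPow p n μ)⁻¹).1‖ * ‖L.1‖ * ‖(k₂⁻¹).1‖ := by
          rw [hg₂]
          exact (GeneralLinearGroup.norm_val_mul_le _ _).trans
            (by gcongr; exact GeneralLinearGroup.norm_val_mul_le _ _)
      _ ≤ ‖((piPow p n μ)⁻¹).1‖ * R ^ 3 ^ n * 1 := by
          gcongr
          exact (mem_Kgp_iff.1 ((Kgp.subgroup p n).inv_mem hk₂)).1
      _ = _ := by rw [mul_one]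

end Finiteness

section Dominance

theorem sum_range_mul_simpleCoroot {n : ℕ} (f : ℕ → ℤ) (h0 : f 0 = 0) (hn : f n = 0) (j : Fin n) :
    ∑ i ∈ Finset.range (n - 1), f (i + 1) * simpleCoroot n i j = f (j + 1) - f j := by
  simp only [simpleCoroot, mul_sub, mul_ite, mul_one, mul_zero, Finset.sum_sub_distrib]
  congr 1
  · rw [Finset.sum_ite_eq]
    split_ifs with h
    · rfl
    · rw [show (j : ℕ) + 1 = n by simp at h; omega, hn]
  · obtain ⟨_ | j, hj⟩ := j
    · simp [h0]
    · rw [Finset.sum_eq_single j (fun i _ hi => if_neg (by simpa [eq_comm] using hi))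
        (fun h => absurd (Finset.mem_range.2 (by omega)) h)]
      simp

theorem domLE_of_sum_tail_nonneg {n : ℕ} {μ lam : Fin n → ℤ} (hsum : ∑ t, (μ t - lam t) = 0)
    (htail : ∀ c : ℕ, 0 ≤ ∑ t ∈ Finset.univ.filter (fun t : Fin n => c ≤ (t : ℕ)), (μ t - lam t)) :
    domLE n μ lam := by
  set σ : ℕ → ℤ := fun c => ∑ t ∈ Finset.univ.filter (fun t : Fin n => c ≤ (t : ℕ)), (μ t - lam t)
  have hσ : ∀ j : Fin n, σ j = (μ j - lam j) + σ (j + 1) := fun j => by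
    simp only [σ]
    rw [← Finset.add_sum_erase (a := j) _ _ (by simp)]
    congr 2
    ext t
    simp [Fin.ext_iff, lt_iff_le_and_ne, eq_comm, and_comm]
  refine ⟨fun i => (σ (i + 1)).toNat, funext fun j => ?_⟩
  have hσ0 : ∀ c, ((σ c).toNat : ℤ) = σ c := fun c => Int.toNat_of_nonneg (htail c)
  simp only [Finset.sum_apply, hσ0]
  have hσn : σ n = 0 := by simp [σ, Finset.filter_false_of_mem fun (t : Fin n) _ => not_le.2 t.2]
  rw [sum_range_mul_simpleCoroot σ (by simpa [σ] using hsum) hσn j, hσ j]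
  ring

variable {p : ℕ} [Fact p.Prime] {n : ℕ}

theorem domLE_of_mem_inter {lam μ : Fin n → ℤ} {g : GL (Fin n) ℚ_[p]}
    (hg : g ∈ (Kgp p n * {piPow p n μ} * Uplus p n) ∩ (Kgp p n * {piPow p n lam} * Uminus p n)) :
    domLE n μ lam := by
  have hp : (1 : ℝ) < p := Nat.one_lt_cast.2 (Fact.out : p.Prime).one_lt
  obtain ⟨k₁, hk₁, k₂, hk₂, U, hU, L, hL, hLd, hUL, -, -⟩ := exists_upper_mul_lower hg
  have hU' : U.1.IsUpperTriangular := fun _ _ h => hU.2 _ _ h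
  obtain ⟨hk, hdet⟩ :=
    mem_Kgp_iff.1 (hUL ▸ (Kgp.subgroup p n).mul_mem ((Kgp.subgroup p n).inv_mem hk₁) hk₂)
  rw [GeneralLinearGroup.coe_mul] at hk hdet
  have hdiag : ∀ s : Finset (Fin n),
      ‖∏ t ∈ s, L.1 t t‖ = (p : ℝ) ^ (-∑ t ∈ s, (μ t - lam t)) := fun s => by
    rw [Finset.prod_congr rfl fun t _ => hLd t, Padic.norm_prod_p_zpow]
  refine domLE_of_sum_tail_nonneg ?_ fun c => ?_
  · rw [det_mul, det_of_isUpperTriangular hU', det_of_isLowerTriangular _ hL] at hdet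
    simp only [hU.1, Finset.prod_const_one, one_mul, hdiag] at hdet
    rwa [zpow_eq_one_iff_right₀ (by positivity) hp.ne', neg_eq_zero] at hdet
  · set q := fun t : Fin n => c ≤ (t : ℕ)
    have hminor := Padic.norm_det_le_one (A := (U.1 * L.1).toBlock q q)
      ((norm_le_iff zero_le_one).2 fun _ _ =>
        (norm_entry_le_entrywise_sup_norm (U.1 * L.1)).trans hk)
    rwa [det_toBlock_mul_eq_prod_diag hU' hU.1 hL fun a b hab h => h.trans hab,
      ← Finset.prod_subtype (Finset.univ.filter q) (by simp) fun t => L.1 t t, hdiag,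
      zpow_le_one_iff_right₀ hp, neg_nonpos] at hminor

end Dominance

open Pointwise in
theorem gindikin_karpelevich_finiteness_general (p : ℕ) [Fact p.Prime] (n : ℕ)
    (lam μ : Fin n → ℤ) :
    {C : Set (GL (Fin n) ℚ_[p]) |
        ∃ g ∈ (Kgp p n * {piPow p n μ} * Uplus p n) ∩ (Kgp p n * {piPow p n lam} * Uminus p n),
          C = Kgp p n * {g}}.Finite ∧
      (((Kgp p n * {piPow p n μ} * Uplus p n) ∩
          (Kgp p n * {piPow p n lam} * Uminus p n)).Nonempty → domLE n μ lam) := by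
  obtain ⟨C, hC⟩ := exists_norm_le_of_mem_inter (p := p) lam μ
  refine ⟨(finite_Kgp_cosets_of_norm_le C).subset ?_, fun ⟨g, hg⟩ => domLE_of_mem_inter hg⟩
  rintro _ ⟨g, hg, rfl⟩
  exact ⟨g, hC g hg, rfl⟩

open Pointwise in
/-- **Gindikin–Karpelevich Finiteness** (Theorem 1.3, type `A_{n−1}` instance):
`K\(K·π^{μ}·U⁺ ∩ K·π^{λ}·U⁻)` is finite, and empty unless `μ ≤ λ`. -/
theorem gindikin_karpelevich_finiteness (p : ℕ) [Fact p.Prime] (n : ℕ) (hn : 2 ≤ n)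
    (lam μ : Fin n → ℤ) :
    {C : Set (GL (Fin n) ℚ_[p]) |
        ∃ g ∈ (Kgp p n * {piPow p n μ} * Uplus p n) ∩ (Kgp p n * {piPow p n lam} * Uminus p n),
          C = Kgp p n * {g}}.Finite ∧
      (((Kgp p n * {piPow p n μ} * Uplus p n) ∩
          (Kgp p n * {piPow p n lam} * Uminus p n)).Nonempty → domLE n μ lam) :=
  gindikin_karpelevich_finiteness_general p n lam μ
end

section
/- (Corollary 3.4, consequence of Joseph's Lemma, type A_{n−1} instance.) Let w ∈ S_n, let c_1,…,c_{n−1} be nonnegative integers, and set μ = −Σ_{i=1}^{n−1} c_i(e_i − e_{i+1}) ∈ ℤⁿ. If there exist u⁻ ∈ U⁻, x ∈ U⁺_{w,π} and u ∈ U⁺ with u⁻ = x·w·π^{μ}·u, then ℓ(w) ≤ 2(c_1 + ⋯ + c_{n−1}). -/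
open Matrix Pointwise

/-- `U⁺_{w,π}`: elements `u ∈ U⁺` all of whose entries of `u − 1` lie in `pℤ_p`
and with `w·u·w⁻¹ ∈ U⁻`. -/
def UplusWpi (p : ℕ) [Fact p.Prime] (n : ℕ) (w : Equiv.Perm (Fin n)) :
    Set (GL (Fin n) ℚ_[p]) :=
  {u | u ∈ Uplus p n ∧
    (∀ i j : Fin n, ‖((u : Matrix (Fin n) (Fin n) ℚ_[p]) - 1) i j‖ ≤ (p : ℝ)⁻¹) ∧
    permGL p n w * u * (permGL p n w)⁻¹ ∈ Uminus p n}

/-!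
Compare leading `K × K` principal minors on both sides of `u⁻ = x·w·π^μ·u`. Those of `u⁻` and
`u` are `1`, and that of `π^μ` is `p^(μ_1 + ⋯ + μ_K) = p^(-c_K)`, so the minor of `x·w` has
absolute value `p^(-c_K)`. Since `x ≡ 1 (mod p)`, every column `j ≤ K` of `x·w` with `w j > K`
is divisible by `p` inside the minor, and the ultrametric inequality bounds the minor by
`p^(-#{j ≤ K < w j})`; hence `#{j ≤ K < w j} ≤ c_K`. On the other hand distinct inversions of
`w` give distinct pairs (element, cut) in which `w` carries the element across the cut, upwards
or downwards, and as many elements cross each cut upwards as downwards, so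
`ℓ(w) ≤ 2 Σ_K #{j ≤ K < w j}`.
-/

open Finset

namespace Equiv.Perm

variable {n : ℕ} (v : Perm (Fin n))

def upCrossings (K : ℕ) : ℕ := #{i : Fin n | (i : ℕ) < K ∧ K ≤ (v i : ℕ)}

def downCrossings (K : ℕ) : ℕ := #{i : Fin n | (v i : ℕ) < K ∧ K ≤ (i : ℕ)}

theorem downCrossings_eq_upCrossings (K : ℕ) : v.downCrossings K = v.upCrossings K := by
  have hcard : #{i | (v i : ℕ) < K} = #{i : Fin n | (i : ℕ) < K} :=
    card_bij (fun i _ => v i) (by simp) (fun _ _ _ _ h => v.injective h)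
      (fun j hj => ⟨v⁻¹ j, by simpa using hj, by simp⟩)
  have hv := card_filter_add_card_filter_not (s := {i | (v i : ℕ) < K})
    (fun i : Fin n => (i : ℕ) < K)
  have hid := card_filter_add_card_filter_not (s := {i : Fin n | (i : ℕ) < K})
    (fun i => (v i : ℕ) < K)
  simp only [filter_filter, not_lt] at hv hid
  rw [downCrossings, upCrossings]
  have hboth :
      #{i | (v i : ℕ) < K ∧ (i : ℕ) < K} = #{i : Fin n | (i : ℕ) < K ∧ (v i : ℕ) < K} := by
    simp only [and_comm]
  omega

theorem permLength_le_sum_crossings :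
    permLength n v ≤ ∑ K : Fin n, (v.upCrossings K + v.downCrossings K) := by
  have hsum : ∀ P : Fin n → Fin n → Prop, [∀ i K, Decidable (P i K)] →
      #{q : Fin n × Fin n | P q.1 q.2} = ∑ K : Fin n, #{i | P i K} := by
    intro P _
    simp only [card_filter, Fintype.sum_prod_type_right]
  set inversions := ({q | q.1 < q.2 ∧ v q.2 < v q.1} : Finset (Fin n × Fin n))
  -- An inversion `(i, j)` with `j ≤ v i` is an upward crossing of cut `j` by `i`; otherwise
  -- `j` crosses cut `v i` downwards.
  have hup : #(inversions.filter fun q => q.2 ≤ v q.1) ≤ ∑ K : Fin n, v.upCrossings K := by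
    calc _ ≤ #{q : Fin n × Fin n | (q.1 : ℕ) < q.2 ∧ (q.2 : ℕ) ≤ v q.1} := by
          refine card_le_card fun q => ?_
          simp only [inversions, mem_filter, mem_univ, true_and, Fin.lt_def, Fin.le_def]
          exact fun h => ⟨h.1.1, h.2⟩
      _ = _ := hsum (fun i K => (i : ℕ) < K ∧ (K : ℕ) ≤ v i)
  have hdown : #(inversions.filter fun q => ¬q.2 ≤ v q.1) ≤ ∑ K : Fin n, v.downCrossings K := by
    calc _ ≤ #{q : Fin n × Fin n | (v q.1 : ℕ) < q.2 ∧ (q.2 : ℕ) ≤ q.1} := by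
          refine card_le_card_of_injOn (fun q => (q.2, v q.1)) (fun q hq => ?_) ?_
          · simp only [inversions, coe_filter, mem_filter, mem_univ, true_and, not_le] at hq ⊢
            exact ⟨Fin.lt_def.mp hq.1.2, Fin.le_def.mp hq.2.le⟩
          · intro q _ r _ h
            simp only [Prod.mk.injEq, EmbeddingLike.apply_eq_iff_eq] at h
            exact Prod.ext h.2 h.1
      _ = _ := hsum (fun i K => (v i : ℕ) < K ∧ (K : ℕ) ≤ i)
  rw [sum_add_distrib, permLength,
    ← card_filter_add_card_filter_not (fun q : Fin n × Fin n => q.2 ≤ v q.1)]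
  exact add_le_add hup hdown

theorem sum_upCrossings_fin_eq_sum_range :
    ∑ K : Fin n, v.upCrossings K = ∑ k ∈ range (n - 1), v.upCrossings (k + 1) := by
  cases n with
  | zero => simp
  | succ m =>
    have hzero : v.upCrossings 0 = 0 := by simp [upCrossings]
    rw [Fin.sum_univ_succ, Fin.val_zero, hzero, zero_add, Nat.add_sub_cancel,
      ← Fin.sum_univ_eq_sum_range (fun k => v.upCrossings (k + 1))]
    simp only [Fin.val_succ]

theorem permLength_le_two_mul_sum_upCrossings :
    permLength n v ≤ 2 * ∑ k ∈ range (n - 1), v.upCrossings (k + 1) := by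
  calc permLength n v ≤ ∑ K : Fin n, (v.upCrossings K + v.downCrossings K) :=
        v.permLength_le_sum_crossings
    _ = 2 * ∑ k ∈ range (n - 1), v.upCrossings (k + 1) := by
        simp only [downCrossings_eq_upCrossings, ← two_mul, ← mul_sum,
          sum_upCrossings_fin_eq_sum_range]

end Equiv.Perm

namespace Matrix

variable {m R : Type*} [Fintype m] [LinearOrder m] [CommRing R]

theorem IsUpperTriangular.toBlock_mul {B : Matrix m m R} (hB : B.IsUpperTriangular)
    (A : Matrix m m R) {p : m → Prop} [DecidablePred p] (hp : IsLowerSet {i | p i}) :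
    (A * B).toBlock p p = A.toBlock p p * B.toBlock p p := by
  have hzero : B.toBlock (fun i => ¬p i) p = 0 := by
    ext ⟨i, hi⟩ ⟨j, hj⟩
    exact hB (lt_of_not_ge fun hij => hi (hp hij hj))
  rw [toBlock_mul_eq_add p p p, hzero, Matrix.mul_zero, add_zero]

theorem IsUpperTriangular.det_toBlock {M : Matrix m m R} (hM : M.IsUpperTriangular)
    (p : m → Prop) [DecidablePred p] : (M.toBlock p p).det = ∏ i : {i // p i}, M i i :=
  det_of_isUpperTriangular hM.submatrix

theorem IsLowerTriangular.det_toBlock {M : Matrix m m R} (hM : M.IsLowerTriangular)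
    (p : m → Prop) [DecidablePred p] : (M.toBlock p p).det = ∏ i : {i // p i}, M i i :=
  det_of_isLowerTriangular _ hM.submatrix

end Matrix

theorem Matrix.norm_det_le_prod_of_norm_le {𝕜 ι : Type*} [NormedField 𝕜] [IsUltrametricDist 𝕜]
    [Fintype ι] [DecidableEq ι] {M : Matrix ι ι 𝕜} {b : ι → ℝ} (hb : ∀ j, 0 ≤ b j)
    (hM : ∀ i j, ‖M i j‖ ≤ b j) : ‖M.det‖ ≤ ∏ j, b j := by
  rw [det_apply']
  refine IsUltrametricDist.norm_sum_le_of_forall_le_of_nonneg (prod_nonneg fun j _ => hb j)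
    fun σ _ => ?_
  have hsign : ‖((Equiv.Perm.sign σ : ℤ) : 𝕜)‖ = 1 := by
    rcases Int.units_eq_one_or (Equiv.Perm.sign σ) with h | h <;> simp [h]
  rw [norm_mul, hsign, one_mul, norm_prod]
  exact prod_le_prod (fun j _ => norm_nonneg _) fun j _ => hM _ _

theorem prod_zpow_eq_zpow_sum {G₀ ι : Type*} [CommGroupWithZero G₀] {a : G₀} (ha : a ≠ 0)
    (s : Finset ι) (f : ι → ℤ) : ∏ i ∈ s, a ^ f i = a ^ ∑ i ∈ s, f i := by
  induction s using Finset.cons_induction with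
  | empty => simp
  | cons i s hi ih => rw [prod_cons, sum_cons, ih, zpow_add₀ ha]

theorem sum_filter_lt_simpleCoroot {n i K : ℕ} (hi : i + 1 < n) :
    ∑ j ∈ univ.filter (fun j : Fin n => (j : ℕ) < K), simpleCoroot n i j
      = if i + 1 = K then 1 else 0 := by
  have hind : ∀ t (ht : t < n), ∑ j ∈ univ.filter (fun j : Fin n => (j : ℕ) < K),
      (if (j : ℕ) = t then (1 : ℤ) else 0) = if t < K then 1 else 0 := by
    intro t ht
    have hval : ∀ j : Fin n, (j : ℕ) = t ↔ (⟨t, ht⟩ : Fin n) = j := fun j => by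
      rw [Fin.ext_iff, eq_comm]
    simp_rw [hval]
    simp [sum_ite_eq]
  simp only [simpleCoroot, sum_sub_distrib, hind i (by omega), hind (i + 1) hi]
  split_ifs <;> omega

theorem sum_filter_lt_coroot_combination {n k : ℕ} (hk : k < n - 1) (c : ℕ → ℕ) :
    ∑ j ∈ univ.filter (fun j : Fin n => (j : ℕ) < k + 1),
      ∑ i ∈ range (n - 1), (c i : ℤ) * simpleCoroot n i j = c k := by
  rw [sum_comm]
  simp_rw [← mul_sum]
  rw [sum_congr rfl fun i hi => by
    rw [sum_filter_lt_simpleCoroot (by rw [mem_range] at hi; omega)]]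
  simp [hk]

theorem mul_permGL_apply (p : ℕ) [Fact p.Prime] {n : ℕ} (w : Equiv.Perm (Fin n))
    (X : Matrix (Fin n) (Fin n) ℚ_[p]) (i j : Fin n) :
    (X * (permGL p n w : Matrix (Fin n) (Fin n) ℚ_[p])) i j = X i (w j) := by
  change (X * ((w⁻¹).toPEquiv.toMatrix : Matrix (Fin n) (Fin n) ℚ_[p])) i j = _
  rw [PEquiv.mul_toMatrix_toPEquiv]
  rfl

theorem norm_apply_le_of_ne {p : ℕ} [Fact p.Prime] {n : ℕ} {X : Matrix (Fin n) (Fin n) ℚ_[p]}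
    (hoff : ∀ i j, ‖(X - 1) i j‖ ≤ (p : ℝ)⁻¹) {i j : Fin n} (hij : i ≠ j) :
    ‖X i j‖ ≤ (p : ℝ)⁻¹ := by
  simpa [Matrix.sub_apply, Matrix.one_apply_ne hij] using hoff i j

theorem norm_apply_le_one {p : ℕ} [Fact p.Prime] {n : ℕ} {X : Matrix (Fin n) (Fin n) ℚ_[p]}
    (hdiag : ∀ i, X i i = 1) (hoff : ∀ i j, ‖(X - 1) i j‖ ≤ (p : ℝ)⁻¹) (i j : Fin n) :
    ‖X i j‖ ≤ 1 := by
  rcases eq_or_ne i j with rfl | hij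
  · simp [hdiag]
  · exact (norm_apply_le_of_ne hoff hij).trans
      (inv_le_one_of_one_le₀ (by exact_mod_cast (Fact.out : p.Prime).one_lt.le))

theorem upCrossings_le_neg_sum {p : ℕ} [Fact p.Prime] {n : ℕ} {w : Equiv.Perm (Fin n)}
    {μ : Fin n → ℤ} {um x u : GL (Fin n) ℚ_[p]} (hum : um ∈ Uminus p n)
    (hxdiag : ∀ i, (x : Matrix (Fin n) (Fin n) ℚ_[p]) i i = 1)
    (hxoff : ∀ i j, ‖((x : Matrix (Fin n) (Fin n) ℚ_[p]) - 1) i j‖ ≤ (p : ℝ)⁻¹)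
    (hu : u ∈ Uplus p n) (heq : um = x * permGL p n w * piPow p n μ * u) (K : ℕ) :
    (w.upCrossings K : ℤ) ≤ -∑ j ∈ univ.filter (fun j : Fin n => (j : ℕ) < K), μ j := by
  have hp : 1 < (p : ℝ) := by exact_mod_cast (Fact.out : p.Prime).one_lt
  have hp0 : (p : ℚ_[p]) ≠ 0 := by exact_mod_cast (Fact.out : p.Prime).ne_zero
  set P : Fin n → Prop := fun j => (j : ℕ) < K
  have hP : IsLowerSet {j | P j} := fun i j hij hi => lt_of_le_of_lt (Fin.le_def.mp hij) hi
  have hmem : ∀ j, j ∈ univ.filter P ↔ P j := by simp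
  set A := (x : Matrix (Fin n) (Fin n) ℚ_[p]) * (permGL p n w : Matrix (Fin n) (Fin n) ℚ_[p])
  have hA : ∀ i j, A i j = (x : Matrix (Fin n) (Fin n) ℚ_[p]) i (w j) :=
    mul_permGL_apply p w _
  have hdet : 1 = (A.toBlock P P).det * (p : ℚ_[p]) ^ ∑ j ∈ univ.filter P, μ j := by
    have hblock := congrArg (fun M => (M.toBlock P P).det) (congrArg Units.val heq)
    simp only [Units.val_mul] at hblock
    have hπ :
        (piPow p n μ : Matrix (Fin n) (Fin n) ℚ_[p]) = diagonal fun i => (p : ℚ_[p]) ^ μ i := rfl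
    have hU : (u : Matrix (Fin n) (Fin n) ℚ_[p]).IsUpperTriangular := fun i j h => hu.2 i j h
    have hL : (um : Matrix (Fin n) (Fin n) ℚ_[p]).IsLowerTriangular := fun i j h => hum.2 i j h
    rw [hU.toBlock_mul _ hP, hπ, IsUpperTriangular.toBlock_mul (blockTriangular_diagonal _) _ hP,
      det_mul, det_mul, hU.det_toBlock, hL.det_toBlock, toBlock_diagonal_self, det_diagonal,
      ← prod_subtype _ hmem fun j => (p : ℚ_[p]) ^ μ j, prod_zpow_eq_zpow_sum hp0] at hblock
    simpa [hu.1, hum.1] using hblock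
  have hbound : ‖(A.toBlock P P).det‖ ≤ (p : ℝ)⁻¹ ^ w.upCrossings K := by
    calc ‖(A.toBlock P P).det‖
        ≤ ∏ j : {j // P j}, if K ≤ (w j : ℕ) then (p : ℝ)⁻¹ else 1 := by
          refine norm_det_le_prod_of_norm_le (fun j => by positivity) fun i j => ?_
          rw [toBlock_apply, hA]
          split_ifs with hK
          · refine norm_apply_le_of_ne hxoff fun hij => ?_
            have hi : (i : ℕ) < K := i.2
            rw [hij] at hi
            omega
          · exact norm_apply_le_one hxdiag hxoff _ _
      _ = (p : ℝ)⁻¹ ^ w.upCrossings K := by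
          rw [← prod_subtype _ hmem (fun j => if K ≤ (w j : ℕ) then (p : ℝ)⁻¹ else 1),
            prod_ite, prod_const, prod_const_one, mul_one, filter_filter]
          rfl
  have hnorm : 1 = ‖(A.toBlock P P).det‖ * (p : ℝ) ^ (-∑ j ∈ univ.filter P, μ j) := by
    simpa [Padic.norm_p_zpow] using congrArg norm hdet
  have hle : 1 ≤ (p : ℝ) ^ (-(w.upCrossings K : ℤ) + -∑ j ∈ univ.filter P, μ j) := by
    rw [zpow_add₀ (by positivity), _root_.zpow_neg, zpow_natCast, ← inv_pow, hnorm]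
    gcongr
  have := (one_le_zpow_iff_right₀ hp).mp hle
  change _ ≤ -∑ j ∈ univ.filter P, μ j
  omega

theorem joseph_corollary_general (p : ℕ) [Fact p.Prime] (n : ℕ)
    (w : Equiv.Perm (Fin n)) (c : ℕ → ℕ) (μ : Fin n → ℤ)
    (hμ : μ = fun j => -∑ i ∈ Finset.range (n - 1), (c i : ℤ) * simpleCoroot n i j)
    (h : ∃ um ∈ Uminus p n, ∃ x ∈ UplusWpi p n w, ∃ u ∈ Uplus p n,
      um = x * permGL p n w * piPow p n μ * u) :
    permLength n w ≤ 2 * ∑ i ∈ Finset.range (n - 1), c i := by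
  obtain ⟨um, hum, x, ⟨hx, hxoff, -⟩, u, hu, heq⟩ := h
  calc permLength n w ≤ 2 * ∑ k ∈ range (n - 1), w.upCrossings (k + 1) :=
        w.permLength_le_two_mul_sum_upCrossings
    _ ≤ 2 * ∑ k ∈ range (n - 1), c k := by
        gcongr with k hk
        have hcross := upCrossings_le_neg_sum hum hx.1 hxoff hu heq (k + 1)
        rw [hμ] at hcross
        simp only [sum_neg_distrib, neg_neg,
          sum_filter_lt_coroot_combination (mem_range.mp hk) c] at hcross
        exact_mod_cast hcross

/-- **Corollary 3.4** (consequence of Joseph's Lemma, type `A_{n−1}` instance):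
if `μ = −Σ c_i(e_i − e_{i+1})` with `c_i ≥ 0` and `U⁻ ∩ U⁺_{w,π}·w·π^{μ}·U⁺ ≠ ∅`,
then `ℓ(w) ≤ 2⟨ρ, −μ⟩ = 2(c_1 + ⋯ + c_{n−1})`. -/
theorem joseph_corollary (p : ℕ) [Fact p.Prime] (n : ℕ) (hn : 2 ≤ n)
    (w : Equiv.Perm (Fin n)) (c : ℕ → ℕ) (μ : Fin n → ℤ)
    (hμ : μ = fun j => -∑ i ∈ Finset.range (n - 1), (c i : ℤ) * simpleCoroot n i j)
    (h : ∃ um ∈ Uminus p n, ∃ x ∈ UplusWpi p n w, ∃ u ∈ Uplus p n,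
      um = x * permGL p n w * piPow p n μ * u) :
    permLength n w ≤ 2 * ∑ i ∈ Finset.range (n - 1), c i :=
  joseph_corollary_general p n w c μ hμ h
end

section
/- (Proposition 6.4(1): quadratic relation for the Demazure–Lusztig operator.) With Λ, α∨, α, s, F, v, Q(Λ), b, c and T as in the context, the F-linear operator T on Q(Λ) satisfies T ∘ T = (v − 1)·T + v·id. -/
noncomputable section

/-- The group algebra `F[Λ]` of the finitely generated free abelian group `Λ = ℤ^d`. -/
abbrev GrpAlg (F : Type) [Field F] (d : ℕ) := AddMonoidAlgebra F (Fin d → ℤ)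

/-- `Q(Λ)`, the field of fractions of the integral domain `F[Λ]`. -/
abbrev QLam (F : Type) [Field F] (d : ℕ) := FractionRing (GrpAlg F d)

/-- `e^λ`, viewed inside `Q(Λ)`. -/
def eQ (F : Type) [Field F] (d : ℕ) (lam : Fin d → ℤ) : QLam F d :=
  algebraMap (GrpAlg F d) (QLam F d) (AddMonoidAlgebra.single lam 1)

/-- The reflection `s(λ) = λ − α(λ)·α∨`, as an automorphism of `Λ`. -/
def reflE (d : ℕ) (cor : Fin d → ℤ) (al : (Fin d → ℤ) →+ ℤ) (h : al cor = 2) :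
    (Fin d → ℤ) ≃+ (Fin d → ℤ) where
  toFun x := x - al x • cor
  invFun x := x - al x • cor
  left_inv x := by
    simp only [map_sub, map_zsmul, h, smul_eq_mul]
    module
  right_inv x := by
    simp only [map_sub, map_zsmul, h, smul_eq_mul]
    module
  map_add' x y := by
    simp only [map_add]
    module

/-- The `F`-algebra automorphism of `Q(Λ)` induced by the reflection `s`. -/
def sQ (F : Type) [Field F] (d : ℕ) (cor : Fin d → ℤ) (al : (Fin d → ℤ) →+ ℤ) (h : al cor = 2) :
    QLam F d ≃+* QLam F d :=
  IsFractionRing.ringEquivOfRingEquiv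
    (AddMonoidAlgebra.domCongr F F (reflE d cor al h)).toRingEquiv

/-- `c = (1 − v·e^{α∨})/(1 − e^{α∨}) ∈ Q(Λ)`. -/
def cDL (F : Type) [Field F] (v : F) (d : ℕ) (cor : Fin d → ℤ) : QLam F d :=
  (1 - algebraMap (GrpAlg F d) (QLam F d) (AddMonoidAlgebra.single cor v)) /
    (1 - eQ F d cor)

/-- `b = (v − 1)/(1 − e^{α∨}) ∈ Q(Λ)`. -/
def bDL (F : Type) [Field F] (v : F) (d : ℕ) (cor : Fin d → ℤ) : QLam F d :=
  algebraMap (GrpAlg F d) (QLam F d) (algebraMap F (GrpAlg F d) (v - 1)) /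
    (1 - eQ F d cor)

/-- The Demazure–Lusztig operator `T(f) = c·s(f) + b·f` on `Q(Λ)`. -/
def TDL (F : Type) [Field F] (v : F) (d : ℕ) (cor : Fin d → ℤ) (al : (Fin d → ℤ) →+ ℤ)
    (h : al cor = 2) : QLam F d → QLam F d :=
  fun f => cDL F v d cor * sQ F d cor al h f + bDL F v d cor * f

end

/-!
Write `X = e^{α∨}`. The reflection `s` is an involution of `Q(Λ)` fixing the
constants and sending `X` to `X⁻¹`. Expanding, `T (T f) = c (s b + b) s f + (c s c + b²) f`, so the
quadratic relation reduces to the two identities `s b + b = v - 1` and `c s c + b² = (v - 1) b + v`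
between rational functions of `X`, which hold as soon as `X ≠ 0, 1`.
-/

section TwistedOperator

variable {K : Type*} [CommRing K]

theorem quadratic_relation_of_involutive {σ : K →+* K} (hσ : Function.Involutive σ) {b c p q : K}
    (hb : σ b + b = p) (hc : c * σ c + b ^ 2 = p * b + q) (f : K) :
    c * σ (c * σ f + b * f) + b * (c * σ f + b * f) = p * (c * σ f + b * f) + q * f := by
  rw [map_add, map_mul, map_mul, hσ]
  linear_combination (c * σ f) * hb + f * hc

end TwistedOperator

section FieldIdentities

variable {K : Type*} [Field K] {X : K}

theorem div_one_sub_inv_add_div_one_sub (hX0 : X ≠ 0) (hX1 : X ≠ 1) (y : K) :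
    y / (1 - X⁻¹) + y / (1 - X) = y := by
  have : X - 1 ≠ 0 := sub_ne_zero.mpr hX1
  field_simp
  ring

theorem demazureLusztig_coeff_identity (hX0 : X ≠ 0) (hX1 : X ≠ 1) (V : K) :
    (1 - V * X) / (1 - X) * ((1 - V * X⁻¹) / (1 - X⁻¹)) + ((V - 1) / (1 - X)) ^ 2 =
      (V - 1) * ((V - 1) / (1 - X)) + V := by
  have : X - 1 ≠ 0 := sub_ne_zero.mpr hX1
  field_simp
  ring

end FieldIdentities

theorem IsFractionRing.ringEquivOfRingEquiv_involutive {A K : Type*} [CommRing A] [IsDomain A]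
    [Field K] [Algebra A K] [IsFractionRing A K] {σ : A ≃+* A} (hσ : Function.Involutive σ) :
    Function.Involutive (IsFractionRing.ringEquivOfRingEquiv (K := K) (L := K) σ) := by
  intro g
  obtain ⟨x, y, -, rfl⟩ := IsFractionRing.div_surjective (A := A) g
  simp only [map_div₀, IsFractionRing.ringEquivOfRingEquiv_algebraMap, hσ x, hσ y]

section GroupAlgebra

variable {F : Type} [Field F] {d : ℕ} {cor : Fin d → ℤ} {al : (Fin d → ℤ) →+ ℤ} (h : al cor = 2)

theorem reflE_self : reflE d cor al h cor = -cor := by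
  show cor - al cor • cor = -cor
  rw [h]
  module

theorem eQ_zero : eQ F d 0 = 1 := by
  rw [eQ, ← AddMonoidAlgebra.one_def, map_one]

theorem eQ_add (lam mu : Fin d → ℤ) : eQ F d (lam + mu) = eQ F d lam * eQ F d mu := by
  rw [eQ, eQ, eQ, ← map_mul, AddMonoidAlgebra.single_mul_single, mul_one]

theorem eQ_neg (lam : Fin d → ℤ) : eQ F d (-lam) = (eQ F d lam)⁻¹ := by
  refine eq_inv_of_mul_eq_one_left ?_
  rw [← eQ_add, neg_add_cancel, eQ_zero]

theorem eQ_ne_zero (lam : Fin d → ℤ) : eQ F d lam ≠ 0 :=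
  left_ne_zero_of_mul_eq_one (by rw [← eQ_add, add_neg_cancel, eQ_zero])

theorem eQ_injective : Function.Injective (eQ F d) := fun _ _ hlm =>
  (AddMonoidAlgebra.single_left_inj one_ne_zero).mp (IsFractionRing.injective _ _ hlm)

theorem eQ_ne_one {lam : Fin d → ℤ} (hlam : lam ≠ 0) : eQ F d lam ≠ 1 := by
  rw [← eQ_zero]
  exact (eQ_injective (F := F)).ne hlam

theorem sQ_algebraMap (x : GrpAlg F d) :
    sQ F d cor al h (algebraMap _ _ x) =
      algebraMap _ _ (AddMonoidAlgebra.domCongr F F (reflE d cor al h) x) :=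
  IsFractionRing.ringEquivOfRingEquiv_algebraMap _ x

theorem sQ_involutive : Function.Involutive (sQ F d cor al h) :=
  IsFractionRing.ringEquivOfRingEquiv_involutive
    (AddMonoidAlgebra.domCongr F F (reflE d cor al h)).symm_apply_apply

theorem sQ_eQ (lam : Fin d → ℤ) : sQ F d cor al h (eQ F d lam) = eQ F d (reflE d cor al h lam) := by
  rw [eQ, sQ_algebraMap, AddMonoidAlgebra.domCongr_single, eQ]

theorem sQ_eQ_self : sQ F d cor al h (eQ F d cor) = (eQ F d cor)⁻¹ := by
  rw [sQ_eQ, reflE_self, eQ_neg]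

theorem sQ_algebraMap_const (v : F) :
    sQ F d cor al h (algebraMap _ _ (algebraMap F (GrpAlg F d) v)) =
      algebraMap _ _ (algebraMap F (GrpAlg F d) v) := by
  rw [sQ_algebraMap, AlgEquiv.commutes]

variable (v : F) (cor)

theorem bDL_eq : bDL F v d cor =
    (algebraMap _ _ (algebraMap F (GrpAlg F d) v) - 1) / (1 - eQ F d cor) := by
  rw [bDL, map_sub, map_sub, map_one, map_one]

theorem cDL_eq : cDL F v d cor =
    (1 - algebraMap _ _ (algebraMap F (GrpAlg F d) v) * eQ F d cor) / (1 - eQ F d cor) := by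
  rw [cDL, eQ, ← map_mul, AddMonoidAlgebra.coe_algebraMap, Function.comp_apply,
    AddMonoidAlgebra.single_mul_single, zero_add, mul_one, Algebra.algebraMap_self_apply]

variable {v cor}

theorem sQ_bDL_add_bDL (hcor : cor ≠ 0) : sQ F d cor al h (bDL F v d cor) + bDL F v d cor =
    algebraMap (GrpAlg F d) (QLam F d) (algebraMap F (GrpAlg F d) (v - 1)) := by
  rw [bDL_eq, map_div₀, map_sub, map_sub, map_one, sQ_algebraMap_const, sQ_eQ_self,
    div_one_sub_inv_add_div_one_sub (eQ_ne_zero cor) (eQ_ne_one hcor), map_sub, map_sub,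
    map_one, map_one]

theorem cDL_mul_sQ_cDL_add_bDL_sq (hcor : cor ≠ 0) :
    cDL F v d cor * sQ F d cor al h (cDL F v d cor) + bDL F v d cor ^ 2 =
      algebraMap (GrpAlg F d) (QLam F d) (algebraMap F (GrpAlg F d) (v - 1)) * bDL F v d cor +
        algebraMap (GrpAlg F d) (QLam F d) (algebraMap F (GrpAlg F d) v) := by
  rw [cDL_eq, bDL_eq, map_div₀, map_sub, map_sub, map_mul, map_one, sQ_algebraMap_const,
    sQ_eQ_self, demazureLusztig_coeff_identity (eQ_ne_zero cor) (eQ_ne_one hcor), map_sub,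
    map_sub, map_one, map_one]

end GroupAlgebra

/-- **Proposition 6.4(1)**: the Demazure–Lusztig operator satisfies the quadratic relation
`T ∘ T = (v − 1)·T + v·id` on `Q(Λ)`. -/
theorem demazure_lusztig_quadratic (F : Type) [Field F] (v : F) (d : ℕ)
    (cor : Fin d → ℤ) (hcor : cor ≠ 0) (al : (Fin d → ℤ) →+ ℤ) (h : al cor = 2) :
    ∀ f : QLam F d,
      TDL F v d cor al h (TDL F v d cor al h f) =
        algebraMap (GrpAlg F d) (QLam F d) (algebraMap F (GrpAlg F d) (v - 1)) *
            TDL F v d cor al h f +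
          algebraMap (GrpAlg F d) (QLam F d) (algebraMap F (GrpAlg F d) v) * f :=
  fun f => quadratic_relation_of_involutive (σ := (sQ F d cor al h : QLam F d →+* QLam F d))
    (sQ_involutive h) (sQ_bDL_add_bDL h hcor) (cDL_mul_sQ_cDL_add_bDL_sq h hcor) f
end
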